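/- arXiv:2104.13162 — 4 statements merged into one kernel-verified Lean document; each statement's English description precedes it below -/
import Mathlib

section
/- For any constants a, b > 0 and Ψ ∈ (0,1], the double integral of f(y,z) = (1 - 2yΦ - 2zΩ + y² + z²)^{-3/2} over the rectangle [-a, a] × [-b, b], where Ψ² + Φ² + Ω² = 1, equals (1/Ψ)[U(a-Φ, b-Ω) + U(a+Φ, b-Ω) + U(a-Φ, b+Ω) + U(a+Φ, b+Ω)], where U(x,y) = arctan( xy / (Ψ √(Ψ² + x² + y²)) ). -/
open Real

lemma rpow_neg_three_half (x : ℝ) (hx : 0 < x) :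
    x ^ (-(3:ℝ)/2) = ((x) * Real.sqrt x)⁻¹ := by
  have h32 : (-(3:ℝ)/2) = -(1 + 1/2) := by norm_num
  rw [h32, Real.rpow_neg hx.le, Real.rpow_add hx, Real.rpow_one, ← Real.sqrt_eq_rpow]

lemma hasDerivAt_inner (c2 : ℝ) (hc2 : 0 < c2) (t : ℝ) :
    HasDerivAt (fun t : ℝ => t / (c2 * Real.sqrt (c2 + t ^ 2)))
      (((c2 + t ^ 2) * Real.sqrt (c2 + t ^ 2))⁻¹) t := by
  have hpos : 0 < c2 + t ^ 2 := by positivity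
  set s := Real.sqrt (c2 + t ^ 2) with hs
  have hspos : 0 < s := Real.sqrt_pos.mpr hpos
  have hs2 : s ^ 2 = c2 + t ^ 2 := Real.sq_sqrt hpos.le
  have hS : HasDerivAt (fun t : ℝ => Real.sqrt (c2 + t ^ 2)) (t / s) t := by
    have h1 : HasDerivAt (fun t : ℝ => c2 + t ^ 2) (2 * t) t := by
      simpa using ((hasDerivAt_pow 2 t).const_add c2)
    have := (Real.hasDerivAt_sqrt hpos.ne').comp t h1
    refine HasDerivAt.congr_deriv this (Eq.symm ?_)
    field_simp
    ring
  have hden : HasDerivAt (fun t : ℝ => c2 * Real.sqrt (c2 + t ^ 2)) (c2 * (t / s)) t :=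
    hS.const_mul c2
  have hdenne : c2 * s ≠ 0 := by positivity
  have := (hasDerivAt_id t).div hden hdenne
  refine HasDerivAt.congr_deriv this (Eq.symm ?_)
  rw [← hs, ← hs2]
  field_simp
  simp only [id]; linear_combination (-1 : ℝ) * hs2

lemma hasDerivAt_outer (Ψ k : ℝ) (hΨ : 0 < Ψ) (u : ℝ) :
    HasDerivAt (fun u : ℝ => (1/Ψ) * Real.arctan (u * k / (Ψ * Real.sqrt (Ψ^2 + u^2 + k^2))))
      (k / ((Ψ^2 + u^2) * Real.sqrt (Ψ^2 + u^2 + k^2))) u := by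
  have hpos : 0 < Ψ^2 + u^2 + k^2 := by positivity
  set s := Real.sqrt (Ψ^2 + u^2 + k^2) with hs
  have hspos : 0 < s := Real.sqrt_pos.mpr hpos
  have hs2 : s ^ 2 = Ψ^2 + u^2 + k^2 := Real.sq_sqrt hpos.le
  have hS : HasDerivAt (fun u : ℝ => Real.sqrt (Ψ^2 + u^2 + k^2)) (u / s) u := by
    have h1 : HasDerivAt (fun u : ℝ => Ψ^2 + u^2 + k^2) (2 * u) u := by
      simpa using (((hasDerivAt_pow 2 u).const_add (Ψ^2)).add_const (k^2))
    have := (Real.hasDerivAt_sqrt hpos.ne').comp u h1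
    refine HasDerivAt.congr_deriv this (Eq.symm ?_)
    rw [← hs]; field_simp
  have hnum : HasDerivAt (fun u : ℝ => u * k) k u := by
    simpa using (hasDerivAt_id u).mul_const k
  have hden : HasDerivAt (fun u : ℝ => Ψ * Real.sqrt (Ψ^2 + u^2 + k^2)) (Ψ * (u / s)) u :=
    hS.const_mul Ψ
  have hdenne : Ψ * s ≠ 0 := by positivity
  have hf := hnum.div hden hdenne
  have := ((Real.hasDerivAt_arctan (u * k / (Ψ * s))).comp u hf).const_mul (1/Ψ)
  refine HasDerivAt.congr_deriv this (Eq.symm ?_)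
  rw [← hs]
  have hne : Ψ^2 + u^2 ≠ 0 := by positivity
  field_simp
  linear_combination (-(k*u^2)) * hs2

set_option maxHeartbeats 1000000 in
/-- The key double-integral identity used to derive the closed-form SNR (Theorem 1). -/
theorem stmt_0 (a b Ψ Φ Ω : ℝ) (ha : 0 < a) (hb : 0 < b)
    (hΨ : 0 < Ψ) (hΨ1 : Ψ ≤ 1) (hsum : Ψ ^ 2 + Φ ^ 2 + Ω ^ 2 = 1) :
    (∫ y in (-a)..a, ∫ z in (-b)..b,
        (1 - 2 * y * Φ - 2 * z * Ω + y ^ 2 + z ^ 2) ^ (-(3 : ℝ) / 2)) =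
      (1 / Ψ) *
        ((fun x y => Real.arctan (x * y / (Ψ * Real.sqrt (Ψ ^ 2 + x ^ 2 + y ^ 2)))) (a - Φ) (b - Ω)
          + (fun x y => Real.arctan (x * y / (Ψ * Real.sqrt (Ψ ^ 2 + x ^ 2 + y ^ 2)))) (a + Φ) (b - Ω)
          + (fun x y => Real.arctan (x * y / (Ψ * Real.sqrt (Ψ ^ 2 + x ^ 2 + y ^ 2)))) (a - Φ) (b + Ω)
          + (fun x y => Real.arctan (x * y / (Ψ * Real.sqrt (Ψ ^ 2 + x ^ 2 + y ^ 2)))) (a + Φ) (b + Ω)) := by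
  have inner_eq : ∀ y : ℝ,
      (∫ z in (-b)..b, (1 - 2 * y * Φ - 2 * z * Ω + y ^ 2 + z ^ 2) ^ (-(3 : ℝ) / 2))
        = (b - Ω) / ((Ψ^2 + (y - Φ)^2) * Real.sqrt (Ψ^2 + (y - Φ)^2 + (b - Ω)^2))
          + (b + Ω) / ((Ψ^2 + (y - Φ)^2) * Real.sqrt (Ψ^2 + (y - Φ)^2 + (b + Ω)^2)) := by
    intro y
    have hc2 : 0 < Ψ^2 + (y - Φ)^2 := by positivity
    have hint : ∀ z : ℝ, (1 - 2 * y * Φ - 2 * z * Ω + y ^ 2 + z ^ 2) ^ (-(3 : ℝ) / 2)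
        = (((Ψ^2 + (y - Φ)^2) + (z - Ω)^2) * Real.sqrt ((Ψ^2 + (y - Φ)^2) + (z - Ω)^2))⁻¹ := by
      intro z
      have hbase : (1 - 2 * y * Φ - 2 * z * Ω + y ^ 2 + z ^ 2)
          = (Ψ^2 + (y - Φ)^2) + (z - Ω)^2 := by linear_combination -hsum
      rw [hbase, rpow_neg_three_half _ (by positivity)]
    simp only [hint]
    have hderiv : ∀ z ∈ Set.uIcc (-b) b,
        HasDerivAt (fun z : ℝ => (z - Ω) / ((Ψ^2 + (y - Φ)^2) * Real.sqrt ((Ψ^2 + (y - Φ)^2) + (z - Ω)^2)))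
          ((((Ψ^2 + (y - Φ)^2) + (z - Ω)^2) * Real.sqrt ((Ψ^2 + (y - Φ)^2) + (z - Ω)^2))⁻¹) z := by
      intro z _
      have := (hasDerivAt_inner _ hc2 (z - Ω)).comp z ((hasDerivAt_id z).sub_const Ω)
      simpa [Function.comp_def] using this
    have hcontb : Continuous fun z : ℝ => (Ψ^2 + (y - Φ)^2) + (z - Ω)^2 := by continuity
    have hcont : Continuous fun z : ℝ =>
        (((Ψ^2 + (y - Φ)^2) + (z - Ω)^2) * Real.sqrt ((Ψ^2 + (y - Φ)^2) + (z - Ω)^2))⁻¹ := by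
      apply Continuous.inv₀ (hcontb.mul (Real.continuous_sqrt.comp hcontb))
      intro z
      have hΨ2 : 0 < Ψ^2 := pow_pos hΨ 2
      show ((Ψ^2 + (y - Φ)^2) + (z - Ω)^2) * Real.sqrt ((Ψ^2 + (y - Φ)^2) + (z - Ω)^2) ≠ 0
      positivity
    rw [intervalIntegral.integral_eq_sub_of_hasDerivAt hderiv
      (hcont.intervalIntegrable _ _)]
    have h1 : (Ψ^2 + (y - Φ)^2) + (-b - Ω)^2 = Ψ^2 + (y - Φ)^2 + (b + Ω)^2 := by ring
    rw [h1]
    ring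
  simp only [inner_eq]
  -- split and compute outer integrals
  have houter : ∀ k : ℝ,
      (∫ u in (-a)..a, k / ((Ψ^2 + (u - Φ)^2) * Real.sqrt (Ψ^2 + (u - Φ)^2 + k^2)))
        = (1/Ψ) * Real.arctan ((a - Φ) * k / (Ψ * Real.sqrt (Ψ^2 + (a - Φ)^2 + k^2)))
          + (1/Ψ) * Real.arctan ((a + Φ) * k / (Ψ * Real.sqrt (Ψ^2 + (a + Φ)^2 + k^2))) := by
    intro k
    have hderiv : ∀ u ∈ Set.uIcc (-a) a,
        HasDerivAt (fun u : ℝ => (1/Ψ) * Real.arctan ((u - Φ) * k / (Ψ * Real.sqrt (Ψ^2 + (u - Φ)^2 + k^2))))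
          (k / ((Ψ^2 + (u - Φ)^2) * Real.sqrt (Ψ^2 + (u - Φ)^2 + k^2))) u := by
      intro u _
      have := (hasDerivAt_outer Ψ k hΨ (u - Φ)).comp u ((hasDerivAt_id u).sub_const Φ)
      simpa [Function.comp_def] using this
    have hcontb : Continuous fun u : ℝ => Ψ^2 + (u - Φ)^2 + k^2 := by continuity
    have hcontb2 : Continuous fun u : ℝ => Ψ^2 + (u - Φ)^2 := by continuity
    have hcont : Continuous fun u : ℝ =>
        k / ((Ψ^2 + (u - Φ)^2) * Real.sqrt (Ψ^2 + (u - Φ)^2 + k^2)) := by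
      apply Continuous.div continuous_const (hcontb2.mul (Real.continuous_sqrt.comp hcontb))
      intro u
      have hΨ2 : 0 < Ψ^2 := pow_pos hΨ 2
      show (Ψ^2 + (u - Φ)^2) * Real.sqrt (Ψ^2 + (u - Φ)^2 + k^2) ≠ 0
      positivity
    rw [intervalIntegral.integral_eq_sub_of_hasDerivAt hderiv (hcont.intervalIntegrable _ _)]
    have h1 : Ψ^2 + (-a - Φ)^2 + k^2 = Ψ^2 + (a + Φ)^2 + k^2 := by ring
    have h2 : (-a - Φ) * k = -((a + Φ) * k) := by ring
    rw [h1, h2, neg_div, Real.arctan_neg]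
    ring
  have int1 : ∀ k : ℝ, IntervalIntegrable
      (fun u : ℝ => k / ((Ψ^2 + (u - Φ)^2) * Real.sqrt (Ψ^2 + (u - Φ)^2 + k^2)))
      MeasureTheory.volume (-a) a := by
    intro k
    have hcontb : Continuous fun u : ℝ => Ψ^2 + (u - Φ)^2 + k^2 := by continuity
    have hcontb2 : Continuous fun u : ℝ => Ψ^2 + (u - Φ)^2 := by continuity
    have : Continuous fun u : ℝ =>
        k / ((Ψ^2 + (u - Φ)^2) * Real.sqrt (Ψ^2 + (u - Φ)^2 + k^2)) := by
      apply Continuous.div continuous_const (hcontb2.mul (Real.continuous_sqrt.comp hcontb))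
      intro u
      have hΨ2 : 0 < Ψ^2 := pow_pos hΨ 2
      show (Ψ^2 + (u - Φ)^2) * Real.sqrt (Ψ^2 + (u - Φ)^2 + k^2) ≠ 0
      positivity
    exact this.intervalIntegrable _ _
  rw [intervalIntegral.integral_add (int1 (b - Ω)) (int1 (b + Ω)), houter (b - Ω), houter (b + Ω)]
  ring
end

section
/- Let γ(L_y, L_z) = (ξP̄/(4π))[U(L_y/(2r)−Φ, L_z/(2r)−Ω) + U(L_y/(2r)+Φ, L_z/(2r)−Ω) + U(L_y/(2r)−Φ, L_z/(2r)+Ω) + U(L_y/(2r)+Φ, L_z/(2r)+Ω)], where U(x,y) = arctan(xy/(Ψ√(Ψ²+x²+y²))). Then γ(L_y, L_z) → ξP̄/2 as L_y → ∞ and L_z → ∞. -/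
open Real Filter

lemma aux_ratio (c : ℝ) (hc : 0 < c) :
    Filter.Tendsto (fun p : ℝ × ℝ => p.1 * p.2 / (c * Real.sqrt (c ^ 2 + p.1 ^ 2 + p.2 ^ 2)))
      (Filter.atTop ×ˢ Filter.atTop) Filter.atTop := by
  rw [tendsto_atTop]
  intro b
  have hM : (0:ℝ) < max c (max 1 (3 * c * b)) := lt_of_lt_of_le hc (le_max_left _ _)
  set M := max c (max 1 (3 * c * b)) with hMdef
  have hev : ∀ᶠ p : ℝ × ℝ in Filter.atTop ×ˢ Filter.atTop, M ≤ p.1 ∧ M ≤ p.2 :=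
    Filter.Eventually.prod_mk (Filter.eventually_ge_atTop M) (Filter.eventually_ge_atTop M)
  filter_upwards [hev] with p hp
  obtain ⟨hx, hy⟩ := hp
  set x := p.1; set y := p.2
  have hxc : c ≤ x := le_trans (le_max_left _ _) hx
  have hyc : c ≤ y := le_trans (le_max_left _ _) hy
  have hx1 : (1:ℝ) ≤ x := le_trans (le_trans (le_max_left _ _) (le_max_right _ _)) hx
  have hy1 : (1:ℝ) ≤ y := le_trans (le_trans (le_max_left _ _) (le_max_right _ _)) hy
  have hMb : 3 * c * b ≤ M := le_trans (le_max_right _ _) (le_max_right _ _)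
  have hx0 : 0 < x := lt_of_lt_of_le hc hxc
  have hy0 : 0 < y := lt_of_lt_of_le hc hyc
  have hs_pos : 0 < Real.sqrt (c ^ 2 + x ^ 2 + y ^ 2) :=
    Real.sqrt_pos.mpr (by positivity)
  have hs_le : Real.sqrt (c ^ 2 + x ^ 2 + y ^ 2) ≤ c + x + y := by
    have h1 : Real.sqrt (c ^ 2 + x ^ 2 + y ^ 2) ≤ Real.sqrt ((c + x + y) ^ 2) :=
      Real.sqrt_le_sqrt (by nlinarith)
    rwa [Real.sqrt_sq (by positivity)] at h1
  rcases le_or_gt b 0 with hb | hb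
  · exact le_trans hb (le_of_lt (by positivity))
  · rw [le_div_iff₀ (by positivity)]
    have key : 3 * (x * y) ≥ M * (c + x + y) := by
      have h1 : M * x ≤ x * y := by nlinarith
      have h2 : M * y ≤ x * y := by nlinarith
      have h3 : M * c ≤ x * y := by nlinarith
      nlinarith
    nlinarith [mul_le_mul_of_nonneg_left hs_le (le_of_lt (mul_pos hb hc))]

lemma aux_arctan (c : ℝ) (hc : 0 < c) (a b : ℝ) :
    Filter.Tendsto
      (fun p : ℝ × ℝ => Real.arctan ((p.1 + a) * (p.2 + b) /
        (c * Real.sqrt (c ^ 2 + (p.1 + a) ^ 2 + (p.2 + b) ^ 2))))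
      (Filter.atTop ×ˢ Filter.atTop) (nhds (π / 2)) := by
  have hshift : Filter.Tendsto (fun p : ℝ × ℝ => (p.1 + a, p.2 + b))
      (Filter.atTop ×ˢ Filter.atTop) (Filter.atTop ×ˢ Filter.atTop) := by
    exact (tendsto_atTop_add_const_right _ a tendsto_fst).prodMk
      (tendsto_atTop_add_const_right _ b tendsto_snd)
  have h := (aux_ratio c hc).comp hshift
  exact (Real.tendsto_arctan_atTop.mono_right nhdsWithin_le_nhds).comp h

set_option maxHeartbeats 1000000 in
/-- Lemma 3: the SNR of an infinitely large planar array tends to ξ·P̄/2. -/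
theorem stmt_2 (ξ P r θ φ : ℝ) (hξ : 0 < ξ) (hξ1 : ξ ≤ 1) (hP : 0 < P) (hr : 0 < r)
    (hθ : θ ∈ Set.Ioo 0 π) (hφ : φ ∈ Set.Ioo (-(π / 2)) (π / 2)) :
    Filter.Tendsto
      (fun L : ℝ × ℝ =>
        let Ψ := Real.sin θ * Real.cos φ
        let Φ := Real.sin θ * Real.sin φ
        let Ω := Real.cos θ
        let U := fun x y => Real.arctan (x * y / (Ψ * Real.sqrt (Ψ ^ 2 + x ^ 2 + y ^ 2)))
        ξ * P / (4 * π) *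
          (U (L.1 / (2 * r) - Φ) (L.2 / (2 * r) - Ω)
            + U (L.1 / (2 * r) + Φ) (L.2 / (2 * r) - Ω)
            + U (L.1 / (2 * r) - Φ) (L.2 / (2 * r) + Ω)
            + U (L.1 / (2 * r) + Φ) (L.2 / (2 * r) + Ω)))
      (Filter.atTop ×ˢ Filter.atTop) (nhds (ξ * P / 2)) := by
  show Filter.Tendsto
      (fun L : ℝ × ℝ =>
        ξ * P / (4 * π) *
          (Real.arctan ((L.1 / (2 * r) - Real.sin θ * Real.sin φ) * (L.2 / (2 * r) - Real.cos θ) /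
              (Real.sin θ * Real.cos φ * Real.sqrt ((Real.sin θ * Real.cos φ) ^ 2 +
                (L.1 / (2 * r) - Real.sin θ * Real.sin φ) ^ 2 + (L.2 / (2 * r) - Real.cos θ) ^ 2)))
            + Real.arctan ((L.1 / (2 * r) + Real.sin θ * Real.sin φ) * (L.2 / (2 * r) - Real.cos θ) /
              (Real.sin θ * Real.cos φ * Real.sqrt ((Real.sin θ * Real.cos φ) ^ 2 +
                (L.1 / (2 * r) + Real.sin θ * Real.sin φ) ^ 2 + (L.2 / (2 * r) - Real.cos θ) ^ 2)))
            + Real.arctan ((L.1 / (2 * r) - Real.sin θ * Real.sin φ) * (L.2 / (2 * r) + Real.cos θ) /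
              (Real.sin θ * Real.cos φ * Real.sqrt ((Real.sin θ * Real.cos φ) ^ 2 +
                (L.1 / (2 * r) - Real.sin θ * Real.sin φ) ^ 2 + (L.2 / (2 * r) + Real.cos θ) ^ 2)))
            + Real.arctan ((L.1 / (2 * r) + Real.sin θ * Real.sin φ) * (L.2 / (2 * r) + Real.cos θ) /
              (Real.sin θ * Real.cos φ * Real.sqrt ((Real.sin θ * Real.cos φ) ^ 2 +
                (L.1 / (2 * r) + Real.sin θ * Real.sin φ) ^ 2 + (L.2 / (2 * r) + Real.cos θ) ^ 2)))))
      (Filter.atTop ×ˢ Filter.atTop) (nhds (ξ * P / 2))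
  obtain ⟨hθ0, hθπ⟩ := hθ
  obtain ⟨hφ0, hφπ⟩ := hφ
  have hΨ : 0 < Real.sin θ * Real.cos φ :=
    mul_pos (Real.sin_pos_of_pos_of_lt_pi hθ0 hθπ) (Real.cos_pos_of_mem_Ioo ⟨hφ0, hφπ⟩)
  set Ψ := Real.sin θ * Real.cos φ
  set Φ := Real.sin θ * Real.sin φ
  set Ω := Real.cos θ
  have hdiv : Filter.Tendsto (fun p : ℝ × ℝ => (p.1 / (2 * r), p.2 / (2 * r)))
      (Filter.atTop ×ˢ Filter.atTop) (Filter.atTop ×ˢ Filter.atTop) := by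
    exact (Filter.Tendsto.atTop_div_const (by linarith) tendsto_fst).prodMk
      (Filter.Tendsto.atTop_div_const (by linarith) tendsto_snd)
  have hterm : ∀ a b : ℝ, Filter.Tendsto
      (fun L : ℝ × ℝ => Real.arctan ((L.1 / (2 * r) + a) * (L.2 / (2 * r) + b) /
        (Ψ * Real.sqrt (Ψ ^ 2 + (L.1 / (2 * r) + a) ^ 2 + (L.2 / (2 * r) + b) ^ 2))))
      (Filter.atTop ×ˢ Filter.atTop) (nhds (π / 2)) := by
    intro a b
    have h := (aux_arctan Ψ hΨ a b).comp hdiv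
    simpa [Function.comp_def] using h
  have h1 := hterm (-Φ) (-Ω)
  have h2 := hterm Φ (-Ω)
  have h3 := hterm (-Φ) Ω
  have h4 := hterm Φ Ω
  simp only [← sub_eq_add_neg] at h1 h2 h3
  have hsum := (((h1.add h2).add h3).add h4).const_mul (ξ * P / (4 * π))
  have heq : ξ * P / (4 * π) * (π / 2 + π / 2 + π / 2 + π / 2) = ξ * P / 2 := by
    field_simp
    ring
  rw [heq] at hsum
  exact hsum
end

section
/- For fixed Φ, Ω ∈ ℝ and Ψ > 0 with Ψ² + Φ² + Ω² = 1, and fixed L_y, L_z > 0, the function Γ(r) = [r²Ψ² + (max(r|Φ| − L_y/2, 0))² + (max(r|Ω| − L_z/2, 0))²]^{3/2} / [r²Ψ² + (r|Φ| + L_y/2)² + (r|Ω| + L_z/2)²]^{3/2} is nondecreasing in r on (0, ∞), takes values in (0, 1], and tends to 1 as r → ∞. -/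
open Real Filter Topology

/-- The weakest-to-strongest power ratio Γ(r) (eq. (25)) is nondecreasing on (0,∞),
takes values in (0,1], and tends to 1 as r → ∞. -/
theorem stmt_5 (Ψ Φ Ω Ly Lz : ℝ) (hΨ : 0 < Ψ) (hsum : Ψ ^ 2 + Φ ^ 2 + Ω ^ 2 = 1)
    (hLy : 0 < Ly) (hLz : 0 < Lz) :
    MonotoneOn
      (fun r : ℝ =>
        (r ^ 2 * Ψ ^ 2 + max (r * |Φ| - Ly / 2) 0 ^ 2 + max (r * |Ω| - Lz / 2) 0 ^ 2)
            ^ ((3 : ℝ) / 2) /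
          (r ^ 2 * Ψ ^ 2 + (r * |Φ| + Ly / 2) ^ 2 + (r * |Ω| + Lz / 2) ^ 2)
            ^ ((3 : ℝ) / 2))
      (Set.Ioi 0) ∧
    (∀ r : ℝ, 0 < r →
      0 < (r ^ 2 * Ψ ^ 2 + max (r * |Φ| - Ly / 2) 0 ^ 2 + max (r * |Ω| - Lz / 2) 0 ^ 2)
            ^ ((3 : ℝ) / 2) /
          (r ^ 2 * Ψ ^ 2 + (r * |Φ| + Ly / 2) ^ 2 + (r * |Ω| + Lz / 2) ^ 2)
            ^ ((3 : ℝ) / 2) ∧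
      (r ^ 2 * Ψ ^ 2 + max (r * |Φ| - Ly / 2) 0 ^ 2 + max (r * |Ω| - Lz / 2) 0 ^ 2)
            ^ ((3 : ℝ) / 2) /
          (r ^ 2 * Ψ ^ 2 + (r * |Φ| + Ly / 2) ^ 2 + (r * |Ω| + Lz / 2) ^ 2)
            ^ ((3 : ℝ) / 2) ≤ 1) ∧
    Filter.Tendsto
      (fun r : ℝ =>
        (r ^ 2 * Ψ ^ 2 + max (r * |Φ| - Ly / 2) 0 ^ 2 + max (r * |Ω| - Lz / 2) 0 ^ 2)
            ^ ((3 : ℝ) / 2) /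
          (r ^ 2 * Ψ ^ 2 + (r * |Φ| + Ly / 2) ^ 2 + (r * |Ω| + Lz / 2) ^ 2)
            ^ ((3 : ℝ) / 2))
      Filter.atTop (nhds 1) := by
  have ha0 : (0:ℝ) ≤ |Φ| := abs_nonneg _
  have hb0 : (0:ℝ) ≤ |Ω| := abs_nonneg _
  have hc0 : (0:ℝ) < Ly / 2 := by linarith
  have hd0 : (0:ℝ) < Lz / 2 := by linarith
  set n : ℝ → ℝ := fun r => Ψ^2 + max (|Φ| - Ly/2/r) 0 ^2 + max (|Ω| - Lz/2/r) 0 ^2 with hn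
  set dd : ℝ → ℝ := fun r => Ψ^2 + (|Φ| + Ly/2/r)^2 + (|Ω| + Lz/2/r)^2 with hdd
  have hnpos : ∀ r : ℝ, 0 < n r := fun r => by
    have : 0 < Ψ^2 := by positivity
    simp only [hn]
    nlinarith [sq_nonneg (max (|Φ| - Ly/2/r) 0), sq_nonneg (max (|Ω| - Lz/2/r) 0)]
  have hddpos : ∀ r : ℝ, 0 < r → 0 < dd r := fun r hr => by
    have : 0 < Ψ^2 := by positivity
    simp only [hdd]
    nlinarith [sq_nonneg (|Φ| + Ly/2/r), sq_nonneg (|Ω| + Lz/2/r)]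
  have hle : ∀ r : ℝ, 0 < r → n r ≤ dd r := by
    intro r hr
    have hcr : 0 < Ly/2/r := by positivity
    have hdr : 0 < Lz/2/r := by positivity
    have h1 : max (|Φ| - Ly/2/r) 0 ^ 2 ≤ (|Φ| + Ly/2/r)^2 := by
      apply pow_le_pow_left₀ (le_max_right _ _)
      exact max_le (by linarith) (by positivity)
    have h2 : max (|Ω| - Lz/2/r) 0 ^ 2 ≤ (|Ω| + Lz/2/r)^2 := by
      apply pow_le_pow_left₀ (le_max_right _ _)
      exact max_le (by linarith) (by positivity)
    simp only [hn, hdd]; linarith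
  have key : ∀ r : ℝ, 0 < r →
      (r ^ 2 * Ψ ^ 2 + max (r * |Φ| - Ly / 2) 0 ^ 2 + max (r * |Ω| - Lz / 2) 0 ^ 2)
            ^ ((3 : ℝ) / 2) /
          (r ^ 2 * Ψ ^ 2 + (r * |Φ| + Ly / 2) ^ 2 + (r * |Ω| + Lz / 2) ^ 2)
            ^ ((3 : ℝ) / 2) = (n r / dd r) ^ ((3:ℝ)/2) := by
    intro r hr
    have e1 : max (r * |Φ| - Ly / 2) 0 = r * max (|Φ| - Ly/2/r) 0 := by
      rw [mul_max_of_nonneg _ _ hr.le, mul_zero]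
      congr 1
      field_simp
    have e2 : max (r * |Ω| - Lz / 2) 0 = r * max (|Ω| - Lz/2/r) 0 := by
      rw [mul_max_of_nonneg _ _ hr.le, mul_zero]
      congr 1
      field_simp
    have e3 : r * |Φ| + Ly / 2 = r * (|Φ| + Ly/2/r) := by field_simp
    have e4 : r * |Ω| + Lz / 2 = r * (|Ω| + Lz/2/r) := by field_simp
    have hN : r ^ 2 * Ψ ^ 2 + max (r * |Φ| - Ly / 2) 0 ^ 2 + max (r * |Ω| - Lz / 2) 0 ^ 2
        = r^2 * n r := by
      rw [e1, e2]; simp only [hn]; ring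
    have hD : r ^ 2 * Ψ ^ 2 + (r * |Φ| + Ly / 2) ^ 2 + (r * |Ω| + Lz / 2) ^ 2
        = r^2 * dd r := by
      rw [e3, e4]; simp only [hdd]; ring
    rw [hN, hD, Real.mul_rpow (sq_nonneg r) (hnpos r).le,
      Real.mul_rpow (sq_nonneg r) (hddpos r hr).le,
      mul_div_mul_left _ _ (ne_of_gt (Real.rpow_pos_of_pos (by positivity) _)),
      Real.div_rpow (hnpos r).le (hddpos r hr).le]
  have hnmono : ∀ r s : ℝ, 0 < r → r ≤ s → n r ≤ n s := by
    intro r s hr hrs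
    have hs : 0 < s := lt_of_lt_of_le hr hrs
    have h1 : Ly/2/s ≤ Ly/2/r := by
      apply div_le_div_of_nonneg_left hc0.le hr hrs
    have h2 : Lz/2/s ≤ Lz/2/r := by
      apply div_le_div_of_nonneg_left hd0.le hr hrs
    have m1 : max (|Φ| - Ly/2/r) 0 ^ 2 ≤ max (|Φ| - Ly/2/s) 0 ^ 2 := by
      apply pow_le_pow_left₀ (le_max_right _ _)
      exact max_le_max (by linarith) le_rfl
    have m2 : max (|Ω| - Lz/2/r) 0 ^ 2 ≤ max (|Ω| - Lz/2/s) 0 ^ 2 := by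
      apply pow_le_pow_left₀ (le_max_right _ _)
      exact max_le_max (by linarith) le_rfl
    simp only [hn]; linarith
  have hddanti : ∀ r s : ℝ, 0 < r → r ≤ s → dd s ≤ dd r := by
    intro r s hr hrs
    have hs : 0 < s := lt_of_lt_of_le hr hrs
    have h1 : Ly/2/s ≤ Ly/2/r := div_le_div_of_nonneg_left hc0.le hr hrs
    have h2 : Lz/2/s ≤ Lz/2/r := div_le_div_of_nonneg_left hd0.le hr hrs
    have m1 : (|Φ| + Ly/2/s)^2 ≤ (|Φ| + Ly/2/r)^2 := by
      apply pow_le_pow_left₀ (by positivity) (by linarith)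
    have m2 : (|Ω| + Lz/2/s)^2 ≤ (|Ω| + Lz/2/r)^2 := by
      apply pow_le_pow_left₀ (by positivity) (by linarith)
    simp only [hdd]; linarith
  refine ⟨?_, ?_, ?_⟩
  · intro r hr s hs hrs
    simp only [Set.mem_Ioi] at hr hs
    simp only [key r hr, key s hs]
    apply Real.rpow_le_rpow (by positivity)
      (div_le_div₀ (hnpos s).le (hnmono r s hr hrs) (hddpos s hs) (hddanti r s hr hrs))
      (by norm_num)
  · intro r hr
    rw [key r hr]
    constructor
    · exact Real.rpow_pos_of_pos (div_pos (hnpos r) (hddpos r hr)) _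
    · exact Real.rpow_le_one (by positivity)
        ((div_le_one (hddpos r hr)).mpr (hle r hr)) (by norm_num)
  · have hcr : Tendsto (fun r : ℝ => Ly/2/r) atTop (𝓝 0) :=
      Tendsto.div_atTop tendsto_const_nhds tendsto_id
    have hdr : Tendsto (fun r : ℝ => Lz/2/r) atTop (𝓝 0) :=
      Tendsto.div_atTop tendsto_const_nhds tendsto_id
    have hnlim : Tendsto n atTop (𝓝 1) := by
      have h : Tendsto n atTop
          (𝓝 (Ψ^2 + max (|Φ| - 0) 0 ^2 + max (|Ω| - 0) 0 ^2)) := by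
        apply Tendsto.add
        apply Tendsto.add tendsto_const_nhds
        · exact ((tendsto_const_nhds.sub hcr).max tendsto_const_nhds).pow 2
        · exact ((tendsto_const_nhds.sub hdr).max tendsto_const_nhds).pow 2
      have : Ψ^2 + max (|Φ| - 0) 0 ^2 + max (|Ω| - 0) 0 ^2 = 1 := by
        rw [sub_zero, sub_zero, max_eq_left ha0, max_eq_left hb0, sq_abs, sq_abs]
        exact hsum
      rwa [this] at h
    have hddlim : Tendsto dd atTop (𝓝 1) := by
      have h : Tendsto dd atTop (𝓝 (Ψ^2 + (|Φ| + 0)^2 + (|Ω| + 0)^2)) := by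
        apply Tendsto.add
        apply Tendsto.add tendsto_const_nhds
        · exact (tendsto_const_nhds.add hcr).pow 2
        · exact (tendsto_const_nhds.add hdr).pow 2
      have : Ψ^2 + (|Φ| + 0)^2 + (|Ω| + 0)^2 = 1 := by
        rw [add_zero, add_zero, sq_abs, sq_abs]; exact hsum
      rwa [this] at h
    have hdiv : Tendsto (fun r => n r / dd r) atTop (𝓝 1) := by
      have := hnlim.div hddlim one_ne_zero
      rwa [div_one] at this
    have hrpow : Tendsto (fun x : ℝ => x ^ ((3:ℝ)/2)) (𝓝 1) (𝓝 1) := by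
      have := (Real.continuousAt_rpow_const 1 ((3:ℝ)/2) (Or.inl one_ne_zero)).tendsto
      rwa [Real.one_rpow] at this
    have := hrpow.comp hdiv
    apply Tendsto.congr' _ this
    filter_upwards [eventually_gt_atTop 0] with r hr
    exact (key r hr).symm
end

section
/- For L_y, L_z > 0 and r, Ψ > 0 with Ψ² + Φ² + Ω² = 1, the closed-form SNR γ = (ξP̄/(4π)) Σ of the four arctan terms U(±L_y/(2r) ∓ Φ, ±L_z/(2r) ∓ Ω) satisfies 0 < γ ≤ ξP̄/2, i.e., the received SNR never exceeds half the transmit SNR times the array occupation ratio. -/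
open Real

lemma snr_hasDeriv (Ψ v : ℝ) (hΨ : 0 < Ψ) (u : ℝ) :
    HasDerivAt (fun u : ℝ => Real.arctan (u * v / (Ψ * Real.sqrt (Ψ ^ 2 + u ^ 2 + v ^ 2))))
      (Ψ * v / ((Ψ ^ 2 + u ^ 2) * Real.sqrt (Ψ ^ 2 + u ^ 2 + v ^ 2))) u := by
  have hq : 0 < Ψ ^ 2 + u ^ 2 + v ^ 2 := by positivity
  have hspos : 0 < Real.sqrt (Ψ ^ 2 + u ^ 2 + v ^ 2) := Real.sqrt_pos.mpr hq
  have hs2 : Real.sqrt (Ψ ^ 2 + u ^ 2 + v ^ 2) ^ 2 = Ψ ^ 2 + u ^ 2 + v ^ 2 :=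
    Real.sq_sqrt hq.le
  have hpoly : HasDerivAt (fun u : ℝ => Ψ ^ 2 + u ^ 2 + v ^ 2) (2 * u) u := by
    simpa using (((hasDerivAt_pow 2 u).const_add (Ψ ^ 2)).add_const (v ^ 2))
  have hsqrt : HasDerivAt (fun u : ℝ => Real.sqrt (Ψ ^ 2 + u ^ 2 + v ^ 2))
      (u / Real.sqrt (Ψ ^ 2 + u ^ 2 + v ^ 2)) u := by
    have h := (Real.hasDerivAt_sqrt (ne_of_gt hq)).comp u hpoly
    refine h.congr_deriv (Eq.symm ?_)
    field_simp
  have hnum : HasDerivAt (fun u : ℝ => u * v) v u := by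
    simpa using (hasDerivAt_id u).mul_const v
  have hden : HasDerivAt (fun u : ℝ => Ψ * Real.sqrt (Ψ ^ 2 + u ^ 2 + v ^ 2))
      (Ψ * (u / Real.sqrt (Ψ ^ 2 + u ^ 2 + v ^ 2))) u := hsqrt.const_mul Ψ
  have hdenne : Ψ * Real.sqrt (Ψ ^ 2 + u ^ 2 + v ^ 2) ≠ 0 := by positivity
  have hdiv := hnum.div hden hdenne
  have harc := (Real.hasDerivAt_arctan
    (u * v / (Ψ * Real.sqrt (Ψ ^ 2 + u ^ 2 + v ^ 2)))).comp u hdiv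
  refine harc.congr_deriv (Eq.symm ?_)
  set s := Real.sqrt (Ψ ^ 2 + u ^ 2 + v ^ 2) with hs
  have hsne : s ≠ 0 := ne_of_gt hspos
  have hΨne : Ψ ≠ 0 := ne_of_gt hΨ
  field_simp
  linear_combination (-(v * u ^ 2)) * hs2

lemma snr_kpos_aux (A x y : ℝ) (hA : 0 < A) (hxy : 0 < x + y) (hy0 : y ≤ 0)
    (sx sy : ℝ) (hsx : 0 < sx) (hsy : 0 < sy)
    (hsx2 : sx ^ 2 = A + x ^ 2) (hsy2 : sy ^ 2 = A + y ^ 2) :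
    0 < x * sy + y * sx := by
  have hxpos : 0 < x := by linarith
  have hq : y ^ 2 * sx ^ 2 < x ^ 2 * sy ^ 2 := by
    rw [hsx2, hsy2]
    nlinarith [mul_pos hA (mul_pos hxy (show (0:ℝ) < x - y by linarith))]
  nlinarith [mul_pos hxpos hsy, mul_nonneg hsx.le (neg_nonneg.2 hy0)]

lemma snr_kpos (A x y : ℝ) (hA : 0 < A) (hxy : 0 < x + y) :
    0 < x / Real.sqrt (A + x ^ 2) + y / Real.sqrt (A + y ^ 2) := by
  have hx : 0 < A + x ^ 2 := by positivity
  have hy : 0 < A + y ^ 2 := by positivity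
  have hsx : 0 < Real.sqrt (A + x ^ 2) := Real.sqrt_pos.mpr hx
  have hsy : 0 < Real.sqrt (A + y ^ 2) := Real.sqrt_pos.mpr hy
  have hsx2 : Real.sqrt (A + x ^ 2) ^ 2 = A + x ^ 2 := Real.sq_sqrt hx.le
  have hsy2 : Real.sqrt (A + y ^ 2) ^ 2 = A + y ^ 2 := Real.sq_sqrt hy.le
  set sx := Real.sqrt (A + x ^ 2)
  set sy := Real.sqrt (A + y ^ 2)
  rw [div_add_div _ _ (ne_of_gt hsx) (ne_of_gt hsy)]
  apply div_pos _ (by positivity)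
  rcases le_or_gt y 0 with hy0 | hy0
  · have := snr_kpos_aux A x y hA hxy hy0 sx sy hsx hsy hsx2 hsy2
    linarith
  · rcases le_or_gt x 0 with hx0 | hx0
    · have := snr_kpos_aux A y x hA (by linarith) hx0 sy sx hsy hsx hsy2 hsx2
      linarith
    · have h1 := mul_pos hx0 hsy
      have h2 := mul_pos hy0 hsx
      nlinarith

lemma snr_pair_mono (Ψ v1 v2 : ℝ) (hΨ : 0 < Ψ) (hv : 0 < v1 + v2) :
    StrictMono (fun u : ℝ =>
      Real.arctan (u * v1 / (Ψ * Real.sqrt (Ψ ^ 2 + u ^ 2 + v1 ^ 2)))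
      + Real.arctan (u * v2 / (Ψ * Real.sqrt (Ψ ^ 2 + u ^ 2 + v2 ^ 2)))) := by
  apply strictMono_of_deriv_pos
  intro u
  have h1 := snr_hasDeriv Ψ v1 hΨ u
  have h2 := snr_hasDeriv Ψ v2 hΨ u
  rw [deriv_fun_add h1.differentiableAt h2.differentiableAt, h1.deriv, h2.deriv]
  have hA : 0 < Ψ ^ 2 + u ^ 2 := by positivity
  have hk := snr_kpos (Ψ ^ 2 + u ^ 2) v1 v2 hA hv
  set s1 := Real.sqrt (Ψ ^ 2 + u ^ 2 + v1 ^ 2) with hs1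
  set s2 := Real.sqrt (Ψ ^ 2 + u ^ 2 + v2 ^ 2) with hs2
  have heq : Ψ * v1 / ((Ψ ^ 2 + u ^ 2) * s1)
      + Ψ * v2 / ((Ψ ^ 2 + u ^ 2) * s2)
      = (Ψ / (Ψ ^ 2 + u ^ 2)) * (v1 / s1 + v2 / s2) := by
    have hs1ne : s1 ≠ 0 := by rw [hs1]; positivity
    have hs2ne : s2 ≠ 0 := by rw [hs2]; positivity
    have hAne : (Ψ ^ 2 + u ^ 2) ≠ 0 := ne_of_gt hA
    field_simp
  rw [heq]
  exact mul_pos (div_pos hΨ hA) hk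

lemma snr_odd (Ψ v u : ℝ) :
    Real.arctan ((-u) * v / (Ψ * Real.sqrt (Ψ ^ 2 + (-u) ^ 2 + v ^ 2)))
      = - Real.arctan (u * v / (Ψ * Real.sqrt (Ψ ^ 2 + u ^ 2 + v ^ 2))) := by
  rw [show ((-u : ℝ)) ^ 2 = u ^ 2 from neg_sq u,
    show (-u) * v = -(u * v) by ring, neg_div, Real.arctan_neg]

lemma snr_sum_pos (Ψ u1 u2 v1 v2 : ℝ) (hΨ : 0 < Ψ) (hu : 0 < u1 + u2) (hv : 0 < v1 + v2) :
    0 < Real.arctan (u1 * v1 / (Ψ * Real.sqrt (Ψ ^ 2 + u1 ^ 2 + v1 ^ 2)))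
      + Real.arctan (u2 * v1 / (Ψ * Real.sqrt (Ψ ^ 2 + u2 ^ 2 + v1 ^ 2)))
      + Real.arctan (u1 * v2 / (Ψ * Real.sqrt (Ψ ^ 2 + u1 ^ 2 + v2 ^ 2)))
      + Real.arctan (u2 * v2 / (Ψ * Real.sqrt (Ψ ^ 2 + u2 ^ 2 + v2 ^ 2))) := by
  have hmono := snr_pair_mono Ψ v1 v2 hΨ hv
  have h : Real.arctan ((-u2) * v1 / (Ψ * Real.sqrt (Ψ ^ 2 + (-u2) ^ 2 + v1 ^ 2)))
      + Real.arctan ((-u2) * v2 / (Ψ * Real.sqrt (Ψ ^ 2 + (-u2) ^ 2 + v2 ^ 2)))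
      < Real.arctan (u1 * v1 / (Ψ * Real.sqrt (Ψ ^ 2 + u1 ^ 2 + v1 ^ 2)))
      + Real.arctan (u1 * v2 / (Ψ * Real.sqrt (Ψ ^ 2 + u1 ^ 2 + v2 ^ 2))) :=
    hmono (show -u2 < u1 by linarith)
  rw [snr_odd Ψ v1 u2, snr_odd Ψ v2 u2] at h
  linarith

/-- The closed-form SNR of Theorem 1 satisfies 0 < γ ≤ ξ·P̄/2. -/
theorem stmt_14 (ξ P r Ly Lz Ψ Φ Ω : ℝ) (hξ : 0 < ξ) (hξ1 : ξ ≤ 1) (hP : 0 < P)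
    (hr : 0 < r) (hLy : 0 < Ly) (hLz : 0 < Lz) (hΨ : 0 < Ψ)
    (hsum : Ψ ^ 2 + Φ ^ 2 + Ω ^ 2 = 1) :
    0 < ξ * P / (4 * π) *
        (Real.arctan ((Ly / (2 * r) - Φ) * (Lz / (2 * r) - Ω) /
            (Ψ * Real.sqrt (Ψ ^ 2 + (Ly / (2 * r) - Φ) ^ 2 + (Lz / (2 * r) - Ω) ^ 2)))
          + Real.arctan ((Ly / (2 * r) + Φ) * (Lz / (2 * r) - Ω) /
            (Ψ * Real.sqrt (Ψ ^ 2 + (Ly / (2 * r) + Φ) ^ 2 + (Lz / (2 * r) - Ω) ^ 2)))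
          + Real.arctan ((Ly / (2 * r) - Φ) * (Lz / (2 * r) + Ω) /
            (Ψ * Real.sqrt (Ψ ^ 2 + (Ly / (2 * r) - Φ) ^ 2 + (Lz / (2 * r) + Ω) ^ 2)))
          + Real.arctan ((Ly / (2 * r) + Φ) * (Lz / (2 * r) + Ω) /
            (Ψ * Real.sqrt (Ψ ^ 2 + (Ly / (2 * r) + Φ) ^ 2 + (Lz / (2 * r) + Ω) ^ 2)))) ∧
    ξ * P / (4 * π) *
        (Real.arctan ((Ly / (2 * r) - Φ) * (Lz / (2 * r) - Ω) /
            (Ψ * Real.sqrt (Ψ ^ 2 + (Ly / (2 * r) - Φ) ^ 2 + (Lz / (2 * r) - Ω) ^ 2)))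
          + Real.arctan ((Ly / (2 * r) + Φ) * (Lz / (2 * r) - Ω) /
            (Ψ * Real.sqrt (Ψ ^ 2 + (Ly / (2 * r) + Φ) ^ 2 + (Lz / (2 * r) - Ω) ^ 2)))
          + Real.arctan ((Ly / (2 * r) - Φ) * (Lz / (2 * r) + Ω) /
            (Ψ * Real.sqrt (Ψ ^ 2 + (Ly / (2 * r) - Φ) ^ 2 + (Lz / (2 * r) + Ω) ^ 2)))
          + Real.arctan ((Ly / (2 * r) + Φ) * (Lz / (2 * r) + Ω) /
            (Ψ * Real.sqrt (Ψ ^ 2 + (Ly / (2 * r) + Φ) ^ 2 + (Lz / (2 * r) + Ω) ^ 2))))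
      ≤ ξ * P / 2 := by
  have hπ : (0:ℝ) < π := Real.pi_pos
  have hcoef : 0 < ξ * P / (4 * π) := by positivity
  have hu : 0 < (Ly / (2 * r) - Φ) + (Ly / (2 * r) + Φ) := by
    have : (Ly / (2 * r) - Φ) + (Ly / (2 * r) + Φ) = Ly / r := by
      field_simp; ring
    rw [this]; positivity
  have hv : 0 < (Lz / (2 * r) - Ω) + (Lz / (2 * r) + Ω) := by
    have : (Lz / (2 * r) - Ω) + (Lz / (2 * r) + Ω) = Lz / r := by
      field_simp; ring
    rw [this]; positivity
  have hpos := snr_sum_pos Ψ (Ly / (2 * r) - Φ) (Ly / (2 * r) + Φ)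
    (Lz / (2 * r) - Ω) (Lz / (2 * r) + Ω) hΨ hu hv
  constructor
  · exact mul_pos hcoef hpos
  · have hlt : Real.arctan ((Ly / (2 * r) - Φ) * (Lz / (2 * r) - Ω) /
            (Ψ * Real.sqrt (Ψ ^ 2 + (Ly / (2 * r) - Φ) ^ 2 + (Lz / (2 * r) - Ω) ^ 2)))
          + Real.arctan ((Ly / (2 * r) + Φ) * (Lz / (2 * r) - Ω) /
            (Ψ * Real.sqrt (Ψ ^ 2 + (Ly / (2 * r) + Φ) ^ 2 + (Lz / (2 * r) - Ω) ^ 2)))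
          + Real.arctan ((Ly / (2 * r) - Φ) * (Lz / (2 * r) + Ω) /
            (Ψ * Real.sqrt (Ψ ^ 2 + (Ly / (2 * r) - Φ) ^ 2 + (Lz / (2 * r) + Ω) ^ 2)))
          + Real.arctan ((Ly / (2 * r) + Φ) * (Lz / (2 * r) + Ω) /
            (Ψ * Real.sqrt (Ψ ^ 2 + (Ly / (2 * r) + Φ) ^ 2 + (Lz / (2 * r) + Ω) ^ 2)))
        < 2 * π := by
      have h1 := Real.arctan_lt_pi_div_two ((Ly / (2 * r) - Φ) * (Lz / (2 * r) - Ω) /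
            (Ψ * Real.sqrt (Ψ ^ 2 + (Ly / (2 * r) - Φ) ^ 2 + (Lz / (2 * r) - Ω) ^ 2)))
      have h2 := Real.arctan_lt_pi_div_two ((Ly / (2 * r) + Φ) * (Lz / (2 * r) - Ω) /
            (Ψ * Real.sqrt (Ψ ^ 2 + (Ly / (2 * r) + Φ) ^ 2 + (Lz / (2 * r) - Ω) ^ 2)))
      have h3 := Real.arctan_lt_pi_div_two ((Ly / (2 * r) - Φ) * (Lz / (2 * r) + Ω) /
            (Ψ * Real.sqrt (Ψ ^ 2 + (Ly / (2 * r) - Φ) ^ 2 + (Lz / (2 * r) + Ω) ^ 2)))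
      have h4 := Real.arctan_lt_pi_div_two ((Ly / (2 * r) + Φ) * (Lz / (2 * r) + Ω) /
            (Ψ * Real.sqrt (Ψ ^ 2 + (Ly / (2 * r) + Φ) ^ 2 + (Lz / (2 * r) + Ω) ^ 2)))
      linarith
    have hmul := mul_lt_mul_of_pos_left hlt hcoef
    have heq : ξ * P / (4 * π) * (2 * π) = ξ * P / 2 := by
      field_simp
      ring
    linarith [hmul, heq ▸ hmul]
end
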